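/- arXiv:2604.21371 — 4 statements merged into one kernel-verified Lean document; each statement's English description precedes it below -/
import Mathlib

section
/- Let d_x, d_y be positive integers, d = d_x + d_y, δ > 0, L > 0, μ > 0. Let Y ⊆ ℝ^{d_y} be nonempty, convex, and compact, and set Y_δ = {y + v : y ∈ Y, ‖v‖ ≤ δ}. Suppose f : ℝ^{d_x} × ℝ^{d_y} → ℝ satisfies |f(x₁,y₁) − f(x₂,y₂)| ≤ L·(‖x₁−x₂‖² + ‖y₁−y₂‖²)^{1/2} for all x₁,x₂ ∈ ℝ^{d_x} and y₁,y₂ ∈ Y_δ, and that for every x, the map y ↦ f(x,y) is μ-strongly concave on Y_δ. Let f_δ(x,y) = E_{(u,v) ~ Unif(B^d(0,1))}[ f(x+δu, y+δv) ]. Let y*(x) be the unique maximizer of f(x,·) over Y and y*_δ(x) the unique maximizer of f_δ(x,·) over Y. Then for every x ∈ ℝ^{d_x}, ‖y*(x) − y*_δ(x)‖ ≤ 2√(Lδ/μ). -/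
open MeasureTheory Metric Set

noncomputable section

abbrev Euc (n : ℕ) := EuclideanSpace ℝ (Fin n)

/-- The uniform probability distribution on the closed unit ball of `ℝ^n`. -/
def unifBall (n : ℕ) : Measure (Euc n) :=
  (volume (closedBall (0 : Euc n) 1))⁻¹ • volume.restrict (closedBall (0 : Euc n) 1)

/-- The first `dx` coordinates of a point of `ℝ^{dx+dy}`. -/
def fstPart {dx dy : ℕ} (q : Euc (dx + dy)) : Euc dx := WithLp.toLp 2 (fun i => q (Fin.castAdd dy i))

/-- The last `dy` coordinates of a point of `ℝ^{dx+dy}`. -/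
def sndPart {dx dy : ℕ} (q : Euc (dx + dy)) : Euc dy := WithLp.toLp 2 (fun j => q (Fin.natAdd dx j))

/-- The smoothed surrogate `f_δ(x,y) = E_{(u,v) ~ Unif(B^d(0,1))}[f(x + δu, y + δv)]`. -/
def smoothed (dx dy : ℕ) (δ : ℝ) (f : Euc dx → Euc dy → ℝ) (x : Euc dx) (y : Euc dy) : ℝ :=
  ∫ q : Euc (dx + dy), f (x + δ • fstPart q) (y + δ • sndPart q) ∂(unifBall (dx + dy))

/-- The augmented set `Y_δ = {y + v : y ∈ Y, ‖v‖ ≤ δ}`. -/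
def aug {m : ℕ} (Y : Set (Euc m)) (δ : ℝ) : Set (Euc m) :=
  {y' | ∃ y ∈ Y, ∃ v : Euc m, ‖v‖ ≤ δ ∧ y' = y + v}

/-! The midpoint of a maximizer `a` and any other point `b` shows that an `m`-strongly concave
function drops by at least `m/4 ‖a - b‖²` from `a` to `b`. Averaging over the ball preserves
strong concavity, so `f_δ(x, ·)` is `μ`-strongly concave on `Y` like `f(x, ·)`, and the Lipschitz
bound gives `|f_δ - f| ≤ Lδ` on `Y`. Adding the two growth inequalities,
`μ/2 ‖y* - y*_δ‖² ≤ (f - f_δ)(y*) + (f_δ - f)(y*_δ) ≤ 2Lδ`. -/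

section StrongConcavity

variable {E : Type*} [NormedAddCommGroup E] [NormedSpace ℝ E] {s t : Set E} {m : ℝ}

lemma StrongConcaveOn.subset {f : E → ℝ} (hf : StrongConcaveOn t m f) (hst : s ⊆ t)
    (hs : Convex ℝ s) : StrongConcaveOn s m f :=
  ⟨hs, fun _ hx _ hy _ _ ha hb hab => hf.2 (hst hx) (hst hy) ha hb hab⟩

lemma StrongConcaveOn.comp_add_const {f : E → ℝ} {w : E} (hf : StrongConcaveOn t m f)
    (hs : Convex ℝ s) (hst : MapsTo (· + w) s t) :
    StrongConcaveOn s m (fun y => f (y + w)) := by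
  refine ⟨hs, fun x hx y hy a b ha hb hab => ?_⟩
  have hcomb : a • x + b • y + w = a • (x + w) + b • (y + w) := by
    rw [smul_add, smul_add, add_add_add_comm, ← add_smul, hab, one_smul]
  simpa only [hcomb, add_sub_add_right_eq_sub] using hf.2 (hst hx) (hst hy) ha hb hab

lemma StrongConcaveOn.mul_sq_norm_sub_le_of_isMaxOn {g : E → ℝ} {a b : E}
    (hg : StrongConcaveOn s m g) (ha : a ∈ s) (hmax : IsMaxOn g s a) (hb : b ∈ s) :
    m / 4 * ‖a - b‖ ^ 2 ≤ g a - g b := by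
  have hhalf : (0 : ℝ) ≤ 1 / 2 := by norm_num
  have hmid := hg.2 ha hb hhalf hhalf (add_halves 1)
  have hle : g ((1 / 2 : ℝ) • a + (1 / 2 : ℝ) • b) ≤ g a :=
    hmax (hg.1 ha hb hhalf hhalf (add_halves 1))
  simp only [smul_eq_mul] at hmid
  linarith

lemma norm_sub_le_of_isMaxOn_of_abs_sub_le {g h : E → ℝ} {a b : E} {ε : ℝ} (hm : 0 < m)
    (hg : StrongConcaveOn s m g) (hh : StrongConcaveOn s m h)
    (ha : a ∈ s) (hga : IsMaxOn g s a) (hb : b ∈ s) (hhb : IsMaxOn h s b)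
    (hε : ∀ y ∈ s, |h y - g y| ≤ ε) :
    ‖a - b‖ ≤ 2 * √(ε / m) := by
  have hgrowth_g := hg.mul_sq_norm_sub_le_of_isMaxOn ha hga hb
  have hgrowth_h := hh.mul_sq_norm_sub_le_of_isMaxOn hb hhb ha
  rw [norm_sub_rev] at hgrowth_h
  have hεa := (abs_le.mp (hε a ha)).1
  have hεb := (abs_le.mp (hε b hb)).2
  have hhalf_sq : (‖a - b‖ / 2) ^ 2 ≤ ε / m := by
    rw [le_div_iff₀ hm]
    linarith
  linarith [Real.le_sqrt_of_sq_le hhalf_sq]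

lemma StrongConcaveOn.integral {Ω : Type*} [MeasurableSpace Ω] {ν : Measure Ω}
    [IsProbabilityMeasure ν] {g : Ω → E → ℝ} (hg : ∀ᵐ ω ∂ν, StrongConcaveOn s m (g ω))
    (hint : ∀ y ∈ s, Integrable (fun ω => g ω y) ν) :
    StrongConcaveOn s m (fun y => ∫ ω, g ω y ∂ν) := by
  obtain ⟨ω₀, hω₀⟩ := hg.exists
  refine ⟨hω₀.1, fun x hx y hy a b ha hb hab => ?_⟩
  set c := a * b * (m / 2 * ‖x - y‖ ^ 2)
  have hax := (hint x hx).const_mul a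
  have hby := (hint y hy).const_mul b
  have hlhs : ∫ ω, (a * g ω x + b * g ω y + c) ∂ν
      = a * ∫ ω, g ω x ∂ν + b * ∫ ω, g ω y ∂ν + c := by
    rw [integral_add (f := fun ω => a * g ω x + b * g ω y) (hax.add hby) (integrable_const c),
      integral_add hax hby,
      integral_const_mul, integral_const_mul, integral_const, probReal_univ, one_smul]
  simp only [smul_eq_mul]
  rw [← hlhs]
  exact integral_mono_ae ((hax.add hby).add (integrable_const c))
    (hint _ (hω₀.1 hx hy ha hb hab)) (hg.mono fun ω hω => hω.2 hx hy ha hb hab)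

end StrongConcavity

section UniformBall

instance (n : ℕ) : IsProbabilityMeasure (unifBall n) := by
  constructor
  rw [unifBall, Measure.smul_apply, Measure.restrict_apply_univ, smul_eq_mul]
  exact ENNReal.inv_mul_cancel (measure_closedBall_pos volume (0 : Euc n) one_pos).ne'
    measure_closedBall_lt_top.ne

lemma ae_unifBall_of_forall_mem_closedBall {n : ℕ} {p : Euc n → Prop}
    (h : ∀ q ∈ closedBall (0 : Euc n) 1, p q) : ∀ᵐ q ∂unifBall n, p q := by
  rw [unifBall, Measure.ae_ennreal_smul_measure_iff
      (ENNReal.inv_ne_zero.mpr measure_closedBall_lt_top.ne),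
    ae_restrict_iff' measurableSet_closedBall]
  exact ae_of_all _ h

lemma ContinuousOn.integrable_unifBall {n : ℕ} {g : Euc n → ℝ}
    (hg : ContinuousOn g (closedBall 0 1)) : Integrable g (unifBall n) :=
  (hg.integrableOn_compact (isCompact_closedBall _ _)).smul_measure
    (ENNReal.inv_ne_top.mpr (measure_closedBall_pos volume (0 : Euc n) one_pos).ne')

end UniformBall

section Splitting

variable {dx dy : ℕ}

lemma fstPart_sub (q q' : Euc (dx + dy)) :
    fstPart (dy := dy) (q - q') = fstPart q - fstPart q' := by
  ext i; simp [fstPart]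

lemma sndPart_sub (q q' : Euc (dx + dy)) :
    sndPart (dx := dx) (q - q') = sndPart q - sndPart q' := by
  ext i; simp [sndPart]

lemma fstPart_zero : fstPart (dx := dx) (0 : Euc (dx + dy)) = 0 := by
  ext i; simp [fstPart]

lemma sndPart_zero : sndPart (dy := dy) (0 : Euc (dx + dy)) = 0 := by
  ext i; simp [sndPart]

lemma norm_fstPart_sq_add_norm_sndPart_sq (q : Euc (dx + dy)) :
    ‖fstPart (dy := dy) q‖ ^ 2 + ‖sndPart (dx := dx) q‖ ^ 2 = ‖q‖ ^ 2 := by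
  simp only [EuclideanSpace.norm_sq_eq, fstPart, sndPart]
  exact (Fin.sum_univ_add (f := fun i => ‖q i‖ ^ 2)).symm

lemma norm_sndPart_le (q : Euc (dx + dy)) : ‖sndPart (dx := dx) q‖ ≤ ‖q‖ := by
  have h := norm_fstPart_sq_add_norm_sndPart_sq q
  nlinarith [norm_nonneg (fstPart (dy := dy) q), norm_nonneg (sndPart (dx := dx) q),
    norm_nonneg q]

end Splitting

section Aug

variable {n : ℕ} {Y : Set (Euc n)} {δ : ℝ}

lemma subset_aug (hδ : 0 ≤ δ) : Y ⊆ aug Y δ :=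
  fun y hy => ⟨y, hy, 0, by simpa using hδ, by simp⟩

lemma add_smul_mem_aug {y v : Euc n} (hδ : 0 ≤ δ) (hy : y ∈ Y) (hv : ‖v‖ ≤ 1) :
    y + δ • v ∈ aug Y δ := by
  refine ⟨y, hy, δ • v, ?_, rfl⟩
  rw [norm_smul, Real.norm_of_nonneg hδ]
  nlinarith

lemma Convex.aug (hY : Convex ℝ Y) : Convex ℝ (aug Y δ) := by
  rintro _ ⟨y₁, hy₁, v₁, hv₁, rfl⟩ _ ⟨y₂, hy₂, v₂, hv₂, rfl⟩ a b ha hb hab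
  refine ⟨a • y₁ + b • y₂, hY hy₁ hy₂ ha hb hab, a • v₁ + b • v₂, ?_, by module⟩
  calc ‖a • v₁ + b • v₂‖ ≤ a * ‖v₁‖ + b * ‖v₂‖ := by
        simpa [norm_smul, Real.norm_of_nonneg ha, Real.norm_of_nonneg hb] using
          norm_add_le (a • v₁) (b • v₂)
    _ ≤ a * δ + b * δ := by gcongr
    _ = δ := by rw [← add_mul, hab, one_mul]

end Aug

section Smoothing

variable {dx dy : ℕ} {Y : Set (Euc dy)} {δ L μ : ℝ} {f : Euc dx → Euc dy → ℝ}

lemma abs_sub_le_of_mem_closedBall (hδ : 0 ≤ δ)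
    (hlip : ∀ x₁ x₂ : Euc dx, ∀ y₁ ∈ aug Y δ, ∀ y₂ ∈ aug Y δ,
      |f x₁ y₁ - f x₂ y₂| ≤ L * Real.sqrt (‖x₁ - x₂‖ ^ 2 + ‖y₁ - y₂‖ ^ 2))
    (x : Euc dx) {y : Euc dy} (hy : y ∈ Y) {q q' : Euc (dx + dy)}
    (hq : q ∈ closedBall 0 1) (hq' : q' ∈ closedBall 0 1) :
    |f (x + δ • fstPart q) (y + δ • sndPart q) - f (x + δ • fstPart q') (y + δ • sndPart q')|
      ≤ L * δ * ‖q - q'‖ := by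
  have hmem : ∀ p ∈ closedBall (0 : Euc (dx + dy)) 1, y + δ • sndPart p ∈ aug Y δ :=
    fun p hp => add_smul_mem_aug hδ hy
      ((norm_sndPart_le p).trans (mem_closedBall_zero_iff.mp hp))
  have hdist : ‖(x + δ • fstPart q) - (x + δ • fstPart q')‖ ^ 2
      + ‖(y + δ • sndPart q) - (y + δ • sndPart q')‖ ^ 2 = (δ * ‖q - q'‖) ^ 2 := by
    rw [add_sub_add_left_eq_sub, add_sub_add_left_eq_sub, ← smul_sub, ← smul_sub,
      ← fstPart_sub, ← sndPart_sub, norm_smul, norm_smul, Real.norm_of_nonneg hδ, mul_pow,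
      mul_pow, mul_pow, ← mul_add, norm_fstPart_sq_add_norm_sndPart_sq]
  have h := hlip (x + δ • fstPart q) (x + δ • fstPart q') _ (hmem q hq) _ (hmem q' hq')
  rwa [hdist, Real.sqrt_sq (by positivity), ← mul_assoc] at h

lemma integrable_smoothed_integrand (hδ : 0 ≤ δ) (hL : 0 ≤ L)
    (hlip : ∀ x₁ x₂ : Euc dx, ∀ y₁ ∈ aug Y δ, ∀ y₂ ∈ aug Y δ,
      |f x₁ y₁ - f x₂ y₂| ≤ L * Real.sqrt (‖x₁ - x₂‖ ^ 2 + ‖y₁ - y₂‖ ^ 2))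
    (x : Euc dx) {y : Euc dy} (hy : y ∈ Y) :
    Integrable (fun q : Euc (dx + dy) => f (x + δ • fstPart q) (y + δ • sndPart q))
      (unifBall (dx + dy)) := by
  refine ContinuousOn.integrable_unifBall (LipschitzOnWith.continuousOn
    (K := (L * δ).toNNReal) (LipschitzOnWith.of_dist_le_mul fun q hq q' hq' => ?_))
  rw [Real.dist_eq, dist_eq_norm, Real.coe_toNNReal _ (by positivity)]
  exact abs_sub_le_of_mem_closedBall hδ hlip x hy hq hq'

lemma abs_smoothed_sub_le (hδ : 0 ≤ δ) (hL : 0 ≤ L)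
    (hlip : ∀ x₁ x₂ : Euc dx, ∀ y₁ ∈ aug Y δ, ∀ y₂ ∈ aug Y δ,
      |f x₁ y₁ - f x₂ y₂| ≤ L * Real.sqrt (‖x₁ - x₂‖ ^ 2 + ‖y₁ - y₂‖ ^ 2))
    (x : Euc dx) {y : Euc dy} (hy : y ∈ Y) :
    |smoothed dx dy δ f x y - f x y| ≤ L * δ := by
  have hclose : ∀ᵐ q ∂unifBall (dx + dy),
      ‖f (x + δ • fstPart q) (y + δ • sndPart q) - f x y‖ ≤ L * δ := by
    refine ae_unifBall_of_forall_mem_closedBall fun q hq => ?_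
    have h := abs_sub_le_of_mem_closedBall hδ hlip x hy hq (mem_closedBall_self zero_le_one)
    simp only [fstPart_zero, sndPart_zero, smul_zero, add_zero, sub_zero] at h
    rw [Real.norm_eq_abs]
    exact h.trans (mul_le_of_le_one_right (by positivity) (mem_closedBall_zero_iff.mp hq))
  have hint := norm_integral_le_of_norm_le_const hclose
  rwa [integral_sub (integrable_smoothed_integrand hδ hL hlip x hy) (integrable_const _),
    integral_const, probReal_univ, one_smul, Real.norm_eq_abs, mul_one] at hint

lemma strongConcaveOn_smoothed (hδ : 0 ≤ δ) (hL : 0 ≤ L) (hY : Convex ℝ Y)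
    (hlip : ∀ x₁ x₂ : Euc dx, ∀ y₁ ∈ aug Y δ, ∀ y₂ ∈ aug Y δ,
      |f x₁ y₁ - f x₂ y₂| ≤ L * Real.sqrt (‖x₁ - x₂‖ ^ 2 + ‖y₁ - y₂‖ ^ 2))
    (hconc : ∀ x, StrongConcaveOn (aug Y δ) μ (f x)) (x : Euc dx) :
    StrongConcaveOn Y μ (smoothed dx dy δ f x) :=
  StrongConcaveOn.integral
    (ae_unifBall_of_forall_mem_closedBall fun q hq =>
      (hconc _).comp_add_const hY fun _ hy => add_smul_mem_aug hδ hy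
        ((norm_sndPart_le q).trans (mem_closedBall_zero_iff.mp hq)))
    (fun _ hy => integrable_smoothed_integrand hδ hL hlip x hy)

end Smoothing

theorem dist_maximizer_smoothed_maximizer_general (dx dy : ℕ)
    (δ L μ : ℝ) (hδ : 0 < δ) (hL : 0 < L) (hμ : 0 < μ)
    (Y : Set (Euc dy)) (hYconv : Convex ℝ Y)
    (f : Euc dx → Euc dy → ℝ)
    (hlip : ∀ x₁ x₂ : Euc dx, ∀ y₁ ∈ aug Y δ, ∀ y₂ ∈ aug Y δ,
      |f x₁ y₁ - f x₂ y₂| ≤ L * Real.sqrt (‖x₁ - x₂‖ ^ 2 + ‖y₁ - y₂‖ ^ 2))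
    (hconc : ∀ x : Euc dx, ∀ y₁ ∈ aug Y δ, ∀ y₂ ∈ aug Y δ, ∀ t ∈ Icc (0 : ℝ) 1,
      f x (t • y₁ + (1 - t) • y₂) ≥
        t * f x y₁ + (1 - t) * f x y₂ + μ * (t * (1 - t)) / 2 * ‖y₁ - y₂‖ ^ 2)
    (ystar ystarδ : Euc dx → Euc dy)
    (hystar : ∀ x, ystar x ∈ Y ∧ ∀ y ∈ Y, f x y ≤ f x (ystar x))
    (hystarδ : ∀ x, ystarδ x ∈ Y ∧
      ∀ y ∈ Y, smoothed dx dy δ f x y ≤ smoothed dx dy δ f x (ystarδ x)) :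
    ∀ x : Euc dx, ‖ystar x - ystarδ x‖ ≤ 2 * Real.sqrt (L * δ / μ) := by
  have hconcAug : ∀ x, StrongConcaveOn (aug Y δ) μ (f x) := fun x =>
    ⟨hYconv.aug, fun y₁ hy₁ y₂ hy₂ a b ha hb hab => by
      obtain rfl : b = 1 - a := by linarith
      have h := hconc x y₁ hy₁ y₂ hy₂ a ⟨ha, by linarith⟩
      simp only [smul_eq_mul]
      linarith⟩
  intro x
  obtain ⟨hstar_mem, hstar_max⟩ := hystar x
  obtain ⟨hstarδ_mem, hstarδ_max⟩ := hystarδ x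
  exact norm_sub_le_of_isMaxOn_of_abs_sub_le hμ
    ((hconcAug x).subset (subset_aug hδ.le) hYconv)
    (strongConcaveOn_smoothed hδ.le hL.le hYconv hlip hconcAug x)
    hstar_mem hstar_max hstarδ_mem hstarδ_max
    (fun _ hy => abs_smoothed_sub_le hδ.le hL.le hlip x hy)

/-- if `f` is `L`-Lipschitz on `ℝ^{d_x} × Y_δ` and `μ`-strongly concave in `y`
on `Y_δ`, and `y*(x)` and `y*_δ(x)` are the maximizers over `Y` of `f(x,·)` and of the
uniform-ball smoothing `f_δ(x,·)` respectively, then `‖y*(x) − y*_δ(x)‖ ≤ 2√(Lδ/μ)`. -/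
theorem dist_maximizer_smoothed_maximizer (dx dy : ℕ) (hdx : 0 < dx) (hdy : 0 < dy)
    (δ L μ : ℝ) (hδ : 0 < δ) (hL : 0 < L) (hμ : 0 < μ)
    (Y : Set (Euc dy)) (hYne : Y.Nonempty) (hYconv : Convex ℝ Y) (hYcpt : IsCompact Y)
    (f : Euc dx → Euc dy → ℝ)
    (hlip : ∀ x₁ x₂ : Euc dx, ∀ y₁ ∈ aug Y δ, ∀ y₂ ∈ aug Y δ,
      |f x₁ y₁ - f x₂ y₂| ≤ L * Real.sqrt (‖x₁ - x₂‖ ^ 2 + ‖y₁ - y₂‖ ^ 2))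
    (hconc : ∀ x : Euc dx, ∀ y₁ ∈ aug Y δ, ∀ y₂ ∈ aug Y δ, ∀ t ∈ Icc (0 : ℝ) 1,
      f x (t • y₁ + (1 - t) • y₂) ≥
        t * f x y₁ + (1 - t) * f x y₂ + μ * (t * (1 - t)) / 2 * ‖y₁ - y₂‖ ^ 2)
    (ystar ystarδ : Euc dx → Euc dy)
    (hystar : ∀ x, ystar x ∈ Y ∧ ∀ y ∈ Y, f x y ≤ f x (ystar x))
    (hystarδ : ∀ x, ystarδ x ∈ Y ∧
      ∀ y ∈ Y, smoothed dx dy δ f x y ≤ smoothed dx dy δ f x (ystarδ x)) :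
    ∀ x : Euc dx, ‖ystar x - ystarδ x‖ ≤ 2 * Real.sqrt (L * δ / μ) :=
  dist_maximizer_smoothed_maximizer_general dx dy δ L μ hδ hL hμ Y hYconv f hlip hconc ystar ystarδ
    hystar hystarδ
end
end

section
/- Let X ⊆ ℝ^{d_x} be nonempty, convex, and closed, and let Y ⊆ ℝ^{d_y} be nonempty, convex, and compact. Let g : ℝ^{d_x} × ℝ^{d_y} → ℝ be continuously differentiable with M-Lipschitz gradient (M > 0), and suppose for every x the map y ↦ g(x,y) is μ-strongly concave on Y (μ > 0). Let y*(x) denote the unique maximizer of g(x,·) over Y and Ψ(x) = g(x, y*(x)). Then Ψ is differentiable with ∇Ψ(x) = ∇_x g(x, y*(x)), and for all x ∈ X, y ∈ Y, η_x > 0 and η̃_y ∈ (0, 1/M]: ‖G_X(x, ∇_x g(x,y), η_x)‖ ≤ ‖G_X(x, ∇Ψ(x), η_x)‖ + (2M/μ)·‖G_Y(y, ∇_y g(x,y), η̃_y)‖, where G_X(x, u, η) = (x − Π_X(x − η u))/η and G_Y(y, v, η) = (Π_Y(y + η v) − y)/η. -/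
open Metric Set

noncomputable section

/-- Gradient mapping for the minimization variable: `G_X(x, u, η) = (x − Π_X(x − ηu))/η`. -/
def gradMapX {n : ℕ} (projX : Euc n → Euc n) (x u : Euc n) (η : ℝ) : Euc n :=
  η⁻¹ • (x - projX (x - η • u))

/-- Gradient mapping for the maximization variable: `G_Y(y, v, η) = (Π_Y(y + ηv) − y)/η`. -/
def gradMapY {m : ℕ} (projY : Euc m → Euc m) (y v : Euc m) (η : ℝ) : Euc m :=
  η⁻¹ • (projY (y + η • v) - y)

/-!
Strong concavity turns the first-order optimality conditions of `y*(x)` into the estimate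
`μ‖y*(x₁) - y*(x₂)‖ ≤ ‖∇_y g(x₁, y*(x₂)) - ∇_y g(x₂, y*(x₂))‖`, so `y*` is `(M/μ)`-Lipschitz.
Then `Ψ(x') - Ψ(x)` is squeezed between `g(x', y*(x)) - g(x, y*(x))` and
`g(x', y*(x')) - g(x, y*(x'))`, and the descent lemma together with the Lipschitz bound on `y*`
gives a quadratic remainder for `⟪∇_x g(x, y*(x)), x' - x⟫`: this is Danskin's formula.

For the inequality, nonexpansiveness of `Π_X` makes `G_X(x, ·, η)` `1`-Lipschitz, so the two
gradient mappings differ by at most `M‖y - y*(x)‖`. Adding strong monotonicity of `-∇_y g(x, ·)`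
to the variational inequalities of `Π_Y` and of `y*(x)` gives
`μ‖y - y*(x)‖ ≤ 2‖G_Y(y, ∇_y g(x, y), η)‖` as soon as `ηM ≤ 1`.
-/

open Filter
open scoped RealInnerProductSpace

lemma le_of_mul_sq_le_mul {a b c : ℝ} (ha : 0 ≤ a) (hb : 0 ≤ b) (h : c * a ^ 2 ≤ b * a) :
    c * a ≤ b := by
  rcases ha.eq_or_lt with rfl | ha
  · simpa using hb
  · nlinarith

section Projection

variable {E : Type*} [NormedAddCommGroup E] [InnerProductSpace ℝ E]
  {C : Set E} {p : E → E}

def IsMetricProjection (C : Set E) (p : E → E) : Prop :=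
  ∀ z, p z ∈ C ∧ ∀ w ∈ C, ‖z - p z‖ ≤ ‖z - w‖

lemma inner_sub_proj_nonpos (hC : Convex ℝ C) (hp : IsMetricProjection C p) (z : E) {w : E}
    (hw : w ∈ C) : ⟪z - p z, w - p z⟫ ≤ 0 := by
  have : Nonempty C := ⟨⟨p z, (hp z).1⟩⟩
  refine (norm_eq_iInf_iff_real_inner_le_zero hC (hp z).1).mp ?_ w hw
  exact le_antisymm (le_ciInf fun w => (hp z).2 w w.2)
    (ciInf_le ⟨0, fun _ ⟨_, h⟩ => h ▸ norm_nonneg _⟩ (⟨p z, (hp z).1⟩ : C))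

lemma norm_proj_sub_proj_le (hC : Convex ℝ C) (hp : IsMetricProjection C p) (a b : E) :
    ‖p a - p b‖ ≤ ‖a - b‖ := by
  have ha := inner_sub_proj_nonpos hC hp a (hp b).1
  have hb := inner_sub_proj_nonpos hC hp b (hp a).1
  have hsum : ⟪a - p a, p b - p a⟫ + ⟪b - p b, p a - p b⟫
      = ‖p a - p b‖ ^ 2 - ⟪a - b, p a - p b⟫ := by
    rw [← real_inner_self_eq_norm_sq]
    simp only [inner_sub_left, inner_sub_right]
    linarith [real_inner_comm a (p b), real_inner_comm b (p a), real_inner_comm (p a) (p b),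
      real_inner_comm a (p a), real_inner_comm b (p b)]
  have key : 1 * ‖p a - p b‖ ^ 2 ≤ ‖a - b‖ * ‖p a - p b‖ := by
    linarith [real_inner_le_norm (a - b) (p a - p b)]
  simpa using le_of_mul_sq_le_mul (norm_nonneg _) (norm_nonneg _) key

end Projection

section StrongConcavity

variable {E : Type*} [NormedAddCommGroup E] [NormedSpace ℝ E]

lemma strongConcaveOn_of_forall_mem_Icc {s : Set E} {f : E → ℝ} {μ : ℝ} (hs : Convex ℝ s)
    (h : ∀ y₁ ∈ s, ∀ y₂ ∈ s, ∀ t ∈ Icc (0 : ℝ) 1, f (t • y₁ + (1 - t) • y₂) ≥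
      t * f y₁ + (1 - t) * f y₂ + μ * (t * (1 - t)) / 2 * ‖y₁ - y₂‖ ^ 2) :
    StrongConcaveOn s μ f := by
  refine ⟨hs, fun y₁ hy₁ y₂ hy₂ a b ha hb hab => ?_⟩
  obtain rfl : b = 1 - a := by linarith
  have := h y₁ hy₁ y₂ hy₂ a ⟨ha, by linarith⟩
  simp only [smul_eq_mul]
  linarith

end StrongConcavity

section FirstOrder

variable {F : Type*} [NormedAddCommGroup F] [InnerProductSpace ℝ F] [CompleteSpace F]
  {s : Set F} {f : F → ℝ} {μ : ℝ} {x y : F} {u v : F}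

lemma HasGradientAt.hasDerivAt_add_smul (hf : HasGradientAt f u x) (v : F) :
    HasDerivAt (fun t : ℝ => f (x + t • v)) ⟪u, v⟫ 0 := by
  have h := hf.hasFDerivAt.hasLineDerivAt v
  rw [HasLineDerivAt] at h
  simpa using h

lemma nonneg_of_hasDerivAt_of_isMinOn_Icc {q : ℝ → ℝ} {d : ℝ} (hq : HasDerivAt q d 0)
    (hmin : IsMinOn q (Icc 0 1) 0) : 0 ≤ d := by
  have h1 : (1 : ℝ) ∈ posTangentConeAt (Icc (0 : ℝ) 1) 0 :=
    mem_posTangentConeAt_of_segment_subset (by simp [segment_eq_Icc])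
  simpa using hmin.localize.hasFDerivWithinAt_nonneg hq.hasFDerivAt.hasFDerivWithinAt h1

lemma IsMaxOn.inner_gradient_sub_nonpos (hmax : IsMaxOn f s x) (hs : Convex ℝ s) (hx : x ∈ s)
    (hf : HasGradientAt f u x) (hy : y ∈ s) : ⟪u, y - x⟫ ≤ 0 := by
  simpa using hmax.localize.hasFDerivWithinAt_nonpos hf.hasFDerivAt.hasFDerivWithinAt
    (sub_mem_posTangentConeAt_of_segment_subset (hs.segment_subset hx hy))

lemma StrongConcaveOn.sub_add_le_inner_gradient (hf : StrongConcaveOn s μ f) (hx : x ∈ s)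
    (hy : y ∈ s) (hfx : HasGradientAt f u x) :
    f y - f x + μ / 2 * ‖y - x‖ ^ 2 ≤ ⟪u, y - x⟫ := by
  set a := f y - f x + μ / 2 * ‖y - x‖ ^ 2
  set b := μ / 2 * ‖y - x‖ ^ 2
  -- `t ↦ f (x + t • (y - x)) - t * a + t ^ 2 * b` has derivative `⟪u, y - x⟫ - a` at `0`, and
  -- strong concavity along the segment makes `0` its minimum on `[0, 1]`
  have hq := ((hfx.hasDerivAt_add_smul (y - x)).sub ((hasDerivAt_id' 0).mul_const a)).add
    ((hasDerivAt_pow 2 (0 : ℝ)).mul_const b)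
  have hmin : IsMinOn (fun t : ℝ => f (x + t • (y - x)) - t * a + t ^ 2 * b) (Icc 0 1) 0 := by
    refine isMinOn_iff.2 fun t ht => ?_
    have h := hf.2 hy hx ht.1 (sub_nonneg.2 ht.2) (add_sub_cancel t 1)
    rw [show t • y + (1 - t) • x = x + t • (y - x) by module, smul_eq_mul, smul_eq_mul] at h
    beta_reduce at h
    simp only [zero_smul, add_zero, zero_mul, sub_zero, zero_pow two_ne_zero]
    linear_combination h
  have := nonneg_of_hasDerivAt_of_isMinOn_Icc hq hmin
  norm_num at this
  linarith

lemma StrongConcaveOn.mul_sq_le_inner_gradient_sub (hf : StrongConcaveOn s μ f) (hx : x ∈ s)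
    (hy : y ∈ s) (hfx : HasGradientAt f u x) (hfy : HasGradientAt f v y) :
    μ * ‖y - x‖ ^ 2 ≤ ⟪u - v, y - x⟫ := by
  have h₁ := hf.sub_add_le_inner_gradient hx hy hfx
  have h₂ := hf.sub_add_le_inner_gradient hy hx hfy
  rw [norm_sub_rev, ← neg_sub y x, inner_neg_right] at h₂
  rw [inner_sub_left]
  linarith

end FirstOrder

section Maximizers

variable {F : Type*} [NormedAddCommGroup F] [InnerProductSpace ℝ F] [CompleteSpace F]
  {s : Set F} {f : F → ℝ} {μ : ℝ}

lemma StrongConcaveOn.mul_norm_sub_le_of_isMaxOn {f₁ f₂ : F → ℝ} {y₁ y₂ u₁ u₁' u₂ : F}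
    (hf₁ : StrongConcaveOn s μ f₁) (hy₁ : y₁ ∈ s) (hy₂ : y₂ ∈ s)
    (hmax₁ : IsMaxOn f₁ s y₁) (hmax₂ : IsMaxOn f₂ s y₂) (h₁ : HasGradientAt f₁ u₁ y₁)
    (h₁' : HasGradientAt f₁ u₁' y₂) (h₂ : HasGradientAt f₂ u₂ y₂) :
    μ * ‖y₁ - y₂‖ ≤ ‖u₁' - u₂‖ := by
  have hmono := hf₁.mul_sq_le_inner_gradient_sub hy₁ hy₂ h₁ h₁'
  have hopt₁ := hmax₁.inner_gradient_sub_nonpos hf₁.1 hy₁ h₁ hy₂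
  have hopt₂ := hmax₂.inner_gradient_sub_nonpos hf₁.1 hy₂ h₂ hy₁
  have key : μ * ‖y₁ - y₂‖ ^ 2 ≤ ‖u₁' - u₂‖ * ‖y₁ - y₂‖ := by
    have := real_inner_le_norm (u₁' - u₂) (y₁ - y₂)
    rw [← neg_sub y₁ y₂, inner_neg_right] at hmono hopt₁
    rw [norm_neg] at hmono
    rw [inner_sub_left] at hmono this
    linarith
  exact le_of_mul_sq_le_mul (norm_nonneg _) (norm_nonneg _) key

lemma StrongConcaveOn.mul_norm_sub_le_norm_gradMap {p : F → F} {y y₀ v v₀ : F} {η M : ℝ}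
    (hf : StrongConcaveOn s μ f) (hp : IsMetricProjection s p)
    (hy : y ∈ s) (hy₀ : y₀ ∈ s) (hmax : IsMaxOn f s y₀) (hv : HasGradientAt f v y)
    (hv₀ : HasGradientAt f v₀ y₀) (hlip : ‖v - v₀‖ ≤ M * ‖y - y₀‖) (hη : 0 < η)
    (hηM : η * M ≤ 1) :
    μ * ‖y - y₀‖ ≤ 2 * ‖η⁻¹ • (p (y + η • v) - y)‖ := by
  rw [norm_sub_rev y] at hlip ⊢
  set u := p (y + η • v) - y
  have hpu : p (y + η • v) = y + u := by simp [u]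
  have hmono := hf.mul_sq_le_inner_gradient_sub hy hy₀ hv hv₀
  have hproj := inner_sub_proj_nonpos hf.1 hp (y + η • v) hy₀
  have hopt := hmax.inner_gradient_sub_nonpos hf.1 hy₀ hv₀ (hp (y + η • v)).1
  rw [hpu, show y + η • v - (y + u) = η • v - u by abel,
    show y₀ - (y + u) = (y₀ - y) - u by abel] at hproj
  rw [hpu, show y + u - y₀ = u - (y₀ - y) by abel] at hopt
  have hcs₁ := real_inner_le_norm u (y₀ - y)
  set d := y₀ - y
  simp only [inner_sub_left, inner_sub_right, real_inner_smul_left,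
    real_inner_self_eq_norm_sq] at hmono hproj hopt
  have hcs₂ : η * ⟪v - v₀, u⟫ ≤ η * (M * ‖d‖ * ‖u‖) :=
    mul_le_mul_of_nonneg_left ((real_inner_le_norm _ _).trans
      (mul_le_mul_of_nonneg_right hlip (norm_nonneg u))) hη.le
  have hstep : η * M * (‖d‖ * ‖u‖) ≤ ‖d‖ * ‖u‖ :=
    mul_le_of_le_one_left (by positivity) hηM
  rw [inner_sub_left] at hcs₂
  -- the three variational inequalities add up to `η⟪v - v₀, d⟫ ≤ η⟪v - v₀, u⟫ + ⟪u, d⟫ - ‖u‖²`,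
  -- and `ηM ≤ 1` bounds the first term on the right by `‖d‖‖u‖`
  have key : η * μ * ‖d‖ ^ 2 ≤ 2 * ‖u‖ * ‖d‖ := by
    linarith [mul_le_mul_of_nonneg_left hmono hη.le, mul_le_mul_of_nonneg_left hopt hη.le,
      sq_nonneg ‖u‖]
  rw [norm_smul, Real.norm_of_nonneg (inv_nonneg.2 hη.le), ← mul_assoc,
    mul_comm 2, mul_assoc, le_inv_mul_iff₀ hη, ← mul_assoc]
  exact le_of_mul_sq_le_mul (norm_nonneg _) (by positivity) key

end Maximizers

section Danskin

variable {E F : Type*} [NormedAddCommGroup E] [InnerProductSpace ℝ E] [CompleteSpace E]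

lemma hasGradientAt_of_abs_sub_sub_inner_le {f : E → ℝ} {x v : E} {C : ℝ}
    (h : ∀ x', |f x' - f x - ⟪v, x' - x⟫| ≤ C * ‖x' - x‖ ^ 2) : HasGradientAt f v x := by
  rw [hasGradientAt_iff_hasFDerivAt, hasFDerivAt_iff_isLittleO]
  refine (Asymptotics.IsBigO.of_bound C (Eventually.of_forall fun x' => ?_)).trans_isLittleO
    (Asymptotics.isLittleO_pow_sub_sub x one_lt_two)
  simpa using h x'

lemma abs_sub_sub_inner_le_of_lipschitz_gradient {f : E → ℝ} {f' : E → E} {M : ℝ} (hM : 0 ≤ M)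
    (hf : ∀ x, HasGradientAt f (f' x) x) (hlip : ∀ x₁ x₂, ‖f' x₁ - f' x₂‖ ≤ M * ‖x₁ - x₂‖)
    (x x' : E) : |f x' - f x - ⟪f' x, x' - x⟫| ≤ M * ‖x' - x‖ ^ 2 := by
  have hmvt := (convex_closedBall x ‖x' - x‖).norm_image_sub_le_of_norm_hasFDerivWithin_le'
    (fun z _ => (hf z).hasFDerivAt.hasFDerivWithinAt) (fun z hz => ?_)
    (mem_closedBall_self (norm_nonneg _)) (mem_closedBall.2 (dist_eq_norm x' x).le)
    (φ := InnerProductSpace.toDual ℝ E (f' x)) (C := M * ‖x' - x‖)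
  · simpa [Real.norm_eq_abs, sq, mul_assoc] using hmvt
  · rw [← map_sub, LinearIsometryEquiv.norm_map]
    exact (hlip z x).trans (mul_le_mul_of_nonneg_left (mem_closedBall_iff_norm.1 hz) hM)

lemma hasGradientAt_apply_argmax [NormedAddCommGroup F] {g : E → F → ℝ} {gx : E → F → E}
    {ystar : E → F} {M K : ℝ} (hM : 0 ≤ M) (hgx : ∀ x y, HasGradientAt (fun x' => g x' y) (gx x y) x)
    (hlipx : ∀ x₁ x₂ y, ‖gx x₁ y - gx x₂ y‖ ≤ M * ‖x₁ - x₂‖)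
    (hlipy : ∀ x y₁ y₂, ‖gx x y₁ - gx x y₂‖ ≤ M * ‖y₁ - y₂‖)
    (hmax : ∀ x x', g x (ystar x') ≤ g x (ystar x))
    (hystar : ∀ x₁ x₂, ‖ystar x₁ - ystar x₂‖ ≤ K * ‖x₁ - x₂‖) (x : E) :
    HasGradientAt (fun x' => g x' (ystar x')) (gx x (ystar x)) x := by
  refine hasGradientAt_of_abs_sub_sub_inner_le (C := M + M * K) fun x' => ?_
  have h₀ := abs_sub_sub_inner_le_of_lipschitz_gradient hM (hgx · (ystar x))
    (hlipx · · (ystar x)) x x'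
  have h₁ := abs_sub_sub_inner_le_of_lipschitz_gradient hM (hgx · (ystar x'))
    (hlipx · · (ystar x')) x x'
  have hshift : |⟪gx x (ystar x') - gx x (ystar x), x' - x⟫| ≤ M * K * ‖x' - x‖ ^ 2 := calc
    _ ≤ ‖gx x (ystar x') - gx x (ystar x)‖ * ‖x' - x‖ := abs_real_inner_le_norm _ _
    _ ≤ M * (K * ‖x' - x‖) * ‖x' - x‖ := by
      gcongr
      exact (hlipy _ _ _).trans (mul_le_mul_of_nonneg_left (hystar x' x) hM)
    _ = M * K * ‖x' - x‖ ^ 2 := by ring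
  rw [inner_sub_left] at hshift
  have hlow := hmax x' x
  have hupp := hmax x x'
  rw [abs_le] at h₀ h₁ hshift ⊢
  constructor <;> linarith

end Danskin

section GradientMapping

variable {E : Type*} [NormedAddCommGroup E] [InnerProductSpace ℝ E] {C : Set E} {p : E → E}

lemma norm_inv_smul_sub_proj_sub_le (hC : Convex ℝ C) (hp : IsMetricProjection C p)
    (x u u' : E) (η : ℝ) :
    ‖η⁻¹ • (x - p (x - η • u)) - η⁻¹ • (x - p (x - η • u'))‖ ≤ ‖u - u'‖ := by
  rcases eq_or_ne η 0 with rfl | hη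
  · simp
  rw [← smul_sub, sub_sub_sub_cancel_left, norm_smul, norm_inv, inv_mul_le_iff₀ (by positivity)]
  calc ‖p (x - η • u') - p (x - η • u)‖ ≤ ‖(x - η • u') - (x - η • u)‖ :=
        norm_proj_sub_proj_le hC hp _ _
    _ = ‖η‖ * ‖u - u'‖ := by rw [sub_sub_sub_cancel_left, ← smul_sub, norm_smul]

end GradientMapping

section JointLipschitz

variable {E F G H : Type*} [SeminormedAddCommGroup E] [SeminormedAddCommGroup F]
  [SeminormedAddCommGroup G] [SeminormedAddCommGroup H] {gx : E → F → G} {gy : E → F → H} {M : ℝ}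

lemma abs_le_of_sqrt_sq_add_sq_le {a b c : ℝ} (h : √(a ^ 2 + b ^ 2) ≤ c) : |a| ≤ c ∧ |b| ≤ c :=
  ⟨(Real.abs_le_sqrt (le_add_of_nonneg_right (sq_nonneg b))).trans h,
    (Real.abs_le_sqrt (le_add_of_nonneg_left (sq_nonneg a))).trans h⟩

lemma norm_sub_le_mul_of_sqrt_le_fst
    (hlip : ∀ x₁ x₂ y₁ y₂, √(‖gx x₁ y₁ - gx x₂ y₂‖ ^ 2 + ‖gy x₁ y₁ - gy x₂ y₂‖ ^ 2)
      ≤ M * √(‖x₁ - x₂‖ ^ 2 + ‖y₁ - y₂‖ ^ 2)) (x₁ x₂ : E) (y : F) :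
    ‖gx x₁ y - gx x₂ y‖ ≤ M * ‖x₁ - x₂‖ ∧ ‖gy x₁ y - gy x₂ y‖ ≤ M * ‖x₁ - x₂‖ := by
  simpa [Real.sqrt_sq (norm_nonneg _)] using abs_le_of_sqrt_sq_add_sq_le (hlip x₁ x₂ y y)

lemma norm_sub_le_mul_of_sqrt_le_snd
    (hlip : ∀ x₁ x₂ y₁ y₂, √(‖gx x₁ y₁ - gx x₂ y₂‖ ^ 2 + ‖gy x₁ y₁ - gy x₂ y₂‖ ^ 2)
      ≤ M * √(‖x₁ - x₂‖ ^ 2 + ‖y₁ - y₂‖ ^ 2)) (x : E) (y₁ y₂ : F) :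
    ‖gx x y₁ - gx x y₂‖ ≤ M * ‖y₁ - y₂‖ ∧ ‖gy x y₁ - gy x y₂‖ ≤ M * ‖y₁ - y₂‖ := by
  simpa [Real.sqrt_sq (norm_nonneg _)] using abs_le_of_sqrt_sq_add_sq_le (hlip x x y₁ y₂)

end JointLipschitz

theorem danskin_gradient_mapping_general (dx dy : ℕ)
    (X : Set (Euc dx)) (hXconv : Convex ℝ X)
    (Y : Set (Euc dy)) (hYconv : Convex ℝ Y)
    (M μ : ℝ) (hM : 0 < M) (hμ : 0 < μ)
    (g : Euc dx → Euc dy → ℝ)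
    (gx : Euc dx → Euc dy → Euc dx) (gy : Euc dx → Euc dy → Euc dy)
    (hgx : ∀ x y, HasGradientAt (fun x' => g x' y) (gx x y) x)
    (hgy : ∀ x y, HasGradientAt (fun y' => g x y') (gy x y) y)
    (hgradlip : ∀ x₁ x₂ : Euc dx, ∀ y₁ y₂ : Euc dy,
      Real.sqrt (‖gx x₁ y₁ - gx x₂ y₂‖ ^ 2 + ‖gy x₁ y₁ - gy x₂ y₂‖ ^ 2)
        ≤ M * Real.sqrt (‖x₁ - x₂‖ ^ 2 + ‖y₁ - y₂‖ ^ 2))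
    (hconc : ∀ x : Euc dx, ∀ y₁ ∈ Y, ∀ y₂ ∈ Y, ∀ t ∈ Icc (0 : ℝ) 1,
      g x (t • y₁ + (1 - t) • y₂) ≥
        t * g x y₁ + (1 - t) * g x y₂ + μ * (t * (1 - t)) / 2 * ‖y₁ - y₂‖ ^ 2)
    (ystar : Euc dx → Euc dy)
    (hystar : ∀ x, ystar x ∈ Y ∧ ∀ y ∈ Y, g x y ≤ g x (ystar x))
    (projX : Euc dx → Euc dx)
    (hprojX : ∀ z, projX z ∈ X ∧ ∀ w ∈ X, ‖z - projX z‖ ≤ ‖z - w‖)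
    (projY : Euc dy → Euc dy)
    (hprojY : ∀ z, projY z ∈ Y ∧ ∀ w ∈ Y, ‖z - projY z‖ ≤ ‖z - w‖) :
    (∀ x : Euc dx, HasGradientAt (fun x' => g x' (ystar x')) (gx x (ystar x)) x) ∧
    (∀ x ∈ X, ∀ y ∈ Y, ∀ ηx : ℝ, 0 < ηx → ∀ ηy ∈ Ioc (0 : ℝ) (1 / M),
      ‖gradMapX projX x (gx x y) ηx‖ ≤
        ‖gradMapX projX x (gx x (ystar x)) ηx‖ +
          2 * M / μ * ‖gradMapY projY y (gy x y) ηy‖) := by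
  have hlipx := norm_sub_le_mul_of_sqrt_le_fst hgradlip
  have hlipy := norm_sub_le_mul_of_sqrt_le_snd hgradlip
  have hstrong (x : Euc dx) : StrongConcaveOn Y μ (g x) :=
    strongConcaveOn_of_forall_mem_Icc hYconv (hconc x)
  have hmax (x : Euc dx) : IsMaxOn (g x) Y (ystar x) := isMaxOn_iff.2 (hystar x).2
  have hystarLip (x₁ x₂ : Euc dx) : ‖ystar x₁ - ystar x₂‖ ≤ M / μ * ‖x₁ - x₂‖ := by
    rw [div_mul_eq_mul_div, le_div_iff₀' hμ]
    exact ((hstrong x₁).mul_norm_sub_le_of_isMaxOn (hystar x₁).1 (hystar x₂).1 (hmax x₁)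
      (hmax x₂) (hgy _ _) (hgy _ _) (hgy _ _)).trans (hlipx _ _ _).2
  refine ⟨hasGradientAt_apply_argmax hM.le hgx (fun x₁ x₂ y => (hlipx x₁ x₂ y).1)
    (fun x y₁ y₂ => (hlipy x y₁ y₂).1) (fun x x' => (hystar x).2 _ (hystar x').1) hystarLip,
    fun x _ y hy ηx _ ηy hηy => ?_⟩
  have hdist : μ * ‖y - ystar x‖ ≤ 2 * ‖gradMapY projY y (gy x y) ηy‖ :=
    (hstrong x).mul_norm_sub_le_norm_gradMap hprojY hy (hystar x).1 (hmax x) (hgy x y)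
      (hgy x (ystar x)) (hlipy x y (ystar x)).2 hηy.1 ((le_div_iff₀ hM).1 (by simpa using hηy.2))
  have hgap : ‖gradMapX projX x (gx x y) ηx - gradMapX projX x (gx x (ystar x)) ηx‖
      ≤ M * ‖y - ystar x‖ :=
    (norm_inv_smul_sub_proj_sub_le hXconv hprojX _ _ _ _).trans (hlipy x y (ystar x)).1
  have hscale : M * ‖y - ystar x‖ ≤ 2 * M / μ * ‖gradMapY projY y (gy x y) ηy‖ := by
    rw [div_mul_eq_mul_div, le_div_iff₀ hμ]
    linarith [mul_le_mul_of_nonneg_left hdist hM.le]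
  linarith [norm_le_insert' (gradMapX projX x (gx x y) ηx) (gradMapX projX x (gx x (ystar x)) ηx)]

/-- for a smooth minimax problem with `M`-Lipschitz gradient and `μ`-strongly
concave maximization variable, the primal function `Ψ(x) = g(x, y*(x))` is differentiable with
`∇Ψ(x) = ∇_x g(x, y*(x))` (Danskin), and the gradient mappings satisfy
`‖G_X(x, ∇_x g(x,y), η_x)‖ ≤ ‖G_X(x, ∇Ψ(x), η_x)‖ + (2M/μ)‖G_Y(y, ∇_y g(x,y), η̃_y)‖`. -/
theorem danskin_gradient_mapping (dx dy : ℕ)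
    (X : Set (Euc dx)) (hXne : X.Nonempty) (hXconv : Convex ℝ X) (hXcl : IsClosed X)
    (Y : Set (Euc dy)) (hYne : Y.Nonempty) (hYconv : Convex ℝ Y) (hYcpt : IsCompact Y)
    (M μ : ℝ) (hM : 0 < M) (hμ : 0 < μ)
    (g : Euc dx → Euc dy → ℝ)
    (gx : Euc dx → Euc dy → Euc dx) (gy : Euc dx → Euc dy → Euc dy)
    (hgx : ∀ x y, HasGradientAt (fun x' => g x' y) (gx x y) x)
    (hgy : ∀ x y, HasGradientAt (fun y' => g x y') (gy x y) y)
    (hgradcont : Continuous fun p : Euc dx × Euc dy => (gx p.1 p.2, gy p.1 p.2))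
    (hgradlip : ∀ x₁ x₂ : Euc dx, ∀ y₁ y₂ : Euc dy,
      Real.sqrt (‖gx x₁ y₁ - gx x₂ y₂‖ ^ 2 + ‖gy x₁ y₁ - gy x₂ y₂‖ ^ 2)
        ≤ M * Real.sqrt (‖x₁ - x₂‖ ^ 2 + ‖y₁ - y₂‖ ^ 2))
    (hconc : ∀ x : Euc dx, ∀ y₁ ∈ Y, ∀ y₂ ∈ Y, ∀ t ∈ Icc (0 : ℝ) 1,
      g x (t • y₁ + (1 - t) • y₂) ≥
        t * g x y₁ + (1 - t) * g x y₂ + μ * (t * (1 - t)) / 2 * ‖y₁ - y₂‖ ^ 2)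
    (ystar : Euc dx → Euc dy)
    (hystar : ∀ x, ystar x ∈ Y ∧ ∀ y ∈ Y, g x y ≤ g x (ystar x))
    (projX : Euc dx → Euc dx)
    (hprojX : ∀ z, projX z ∈ X ∧ ∀ w ∈ X, ‖z - projX z‖ ≤ ‖z - w‖)
    (projY : Euc dy → Euc dy)
    (hprojY : ∀ z, projY z ∈ Y ∧ ∀ w ∈ Y, ‖z - projY z‖ ≤ ‖z - w‖) :
    (∀ x : Euc dx, HasGradientAt (fun x' => g x' (ystar x')) (gx x (ystar x)) x) ∧
    (∀ x ∈ X, ∀ y ∈ Y, ∀ ηx : ℝ, 0 < ηx → ∀ ηy ∈ Ioc (0 : ℝ) (1 / M),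
      ‖gradMapX projX x (gx x y) ηx‖ ≤
        ‖gradMapX projX x (gx x (ystar x)) ηx‖ +
          2 * M / μ * ‖gradMapY projY y (gy x y) ηy‖) :=
  danskin_gradient_mapping_general dx dy X hXconv Y hYconv M μ hM hμ g gx gy hgx hgy hgradlip hconc
    ystar hystar projX hprojX projY hprojY
end
end

section
/- Let Y ⊆ ℝ^m be a nonempty closed convex set and let h : ℝ^m → ℝ be differentiable with M-Lipschitz gradient (M > 0). Fix y ∈ Y and a step size η with 0 < η ≤ 1/M, and let y⁺ = Π_Y(y + η ∇h(y)). Then h(y⁺) − h(y) ≥ (1/η − M/2)·‖y⁺ − y‖², and in particular h(y⁺) − h(y) ≥ (1/(2η))·‖y⁺ − y‖². -/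
open Set

noncomputable section

/-!
The projection inequality `⟪u - p, y - p⟫ ≤ 0` at `u = y + η ∇h(y)` says
`‖y⁺ - y‖² ≤ η ⟪∇h(y), y⁺ - y⟫`: the step moves uphill by at least `‖y⁺ - y‖² / η` to first
order. The `M`-Lipschitz gradient bounds the second-order loss by `M/2 ‖y⁺ - y‖²`, and
`η ≤ 1/M` turns `1/η - M/2` into at least `1/(2η)`.
-/

open RealInnerProductSpace

variable {E : Type*} [NormedAddCommGroup E] [InnerProductSpace ℝ E]

theorem HasGradientAt.hasDerivAt_comp_add_smul [CompleteSpace E] {f : E → ℝ} {g x v : E}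
    {t : ℝ} (hf : HasGradientAt f g (x + t • v)) :
    HasDerivAt (fun s : ℝ => f (x + s • v)) ⟪g, v⟫ t := by
  have hline : HasDerivAt (fun s : ℝ => x + s • v) v t := by
    simpa using ((hasDerivAt_id t).smul_const v).const_add x
  simpa [Function.comp_def] using hf.hasFDerivAt.comp_hasDerivAt t hline

theorem inner_sub_half_mul_sq_le_sub_of_lipschitz_gradient [CompleteSpace E] {f : E → ℝ}
    {f' : E → E} {M : ℝ} (hf : ∀ x, HasGradientAt f (f' x) x)
    (hlip : ∀ x y, ‖f' x - f' y‖ ≤ M * ‖x - y‖) (x v : E) :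
    ⟪f' x, v⟫ - M / 2 * ‖v‖ ^ 2 ≤ f (x + v) - f x := by
  set g : ℝ → ℝ := fun t => f (x + t • v) - t * ⟪f' x, v⟫ + M / 2 * t ^ 2 * ‖v‖ ^ 2
  have hg : ∀ t, HasDerivAt g (⟪f' (x + t • v) - f' x, v⟫ + M * t * ‖v‖ ^ 2) t := by
    intro t
    refine ((((hf (x + t • v)).hasDerivAt_comp_add_smul).sub
      ((hasDerivAt_id t).mul_const ⟪f' x, v⟫)).add
      (((hasDerivAt_pow 2 t).const_mul (M / 2)).mul_const (‖v‖ ^ 2))).congr_deriv ?_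
    rw [inner_sub_left]
    simp only [one_mul, Nat.cast_ofNat]
    ring
  have hg_nonneg : ∀ t, 0 ≤ t → 0 ≤ ⟪f' (x + t • v) - f' x, v⟫ + M * t * ‖v‖ ^ 2 := by
    intro t ht
    have hstep : ‖f' (x + t • v) - f' x‖ ≤ M * t * ‖v‖ := by
      simpa [norm_smul, abs_of_nonneg ht, mul_assoc] using hlip (x + t • v) x
    nlinarith [neg_le_of_abs_le (abs_real_inner_le_norm (f' (x + t • v) - f' x) v),
      norm_nonneg v]
  have hmono : g 0 ≤ g 1 :=
    monotoneOn_of_hasDerivWithinAt_nonneg (convex_Ici 0)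
      (fun t _ => (hg t).continuousAt.continuousWithinAt)
      (fun t _ => (hg t).hasDerivWithinAt)
      (fun t ht => hg_nonneg t (interior_subset ht))
      (mem_Ici.2 le_rfl) (mem_Ici.2 zero_le_one) zero_le_one
  have hends : f x ≤ f (x + v) - ⟪f' x, v⟫ + M / 2 * ‖v‖ ^ 2 := by simpa [g] using hmono
  linarith

theorem real_inner_sub_le_zero_of_forall_norm_sub_le {K : Set E} (hK : Convex ℝ K) {u p : E}
    (hp : p ∈ K) (hmin : ∀ w ∈ K, ‖u - p‖ ≤ ‖u - w‖) : ∀ w ∈ K, ⟪u - p, w - p⟫ ≤ 0 := by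
  have : Nonempty K := ⟨⟨p, hp⟩⟩
  rw [← norm_eq_iInf_iff_real_inner_le_zero hK hp]
  have hbdd : BddBelow (range fun w : K => ‖u - w‖) :=
    ⟨0, forall_mem_range.2 fun _ => norm_nonneg _⟩
  exact le_antisymm (le_ciInf fun w => hmin w w.2) (ciInf_le hbdd ⟨p, hp⟩)

theorem sq_norm_sub_le_mul_inner_of_forall_norm_sub_le {K : Set E} (hK : Convex ℝ K)
    {x p g : E} {η : ℝ} (hx : x ∈ K) (hp : p ∈ K)
    (hmin : ∀ w ∈ K, ‖x + η • g - p‖ ≤ ‖x + η • g - w‖) :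
    ‖p - x‖ ^ 2 ≤ η * ⟪g, p - x⟫ := by
  have hvar := real_inner_sub_le_zero_of_forall_norm_sub_le hK hp hmin x hx
  rw [show x + η • g - p = η • g - (p - x) by abel, show x - p = -(p - x) by abel,
    inner_neg_right, inner_sub_left, real_inner_smul_left, real_inner_self_eq_norm_sq] at hvar
  linarith

theorem projected_gradient_ascent_progress_general (m : ℕ)
    (Y : Set (Euc m)) (hYconv : Convex ℝ Y)
    (M : ℝ)
    (h : Euc m → ℝ) (h' : Euc m → Euc m)
    (hdiff : ∀ y, HasGradientAt h (h' y) y)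
    (hlip : ∀ y₁ y₂ : Euc m, ‖h' y₁ - h' y₂‖ ≤ M * ‖y₁ - y₂‖)
    (projY : Euc m → Euc m)
    (hproj : ∀ z, projY z ∈ Y ∧ ∀ w ∈ Y, ‖z - projY z‖ ≤ ‖z - w‖)
    (y : Euc m) (hy : y ∈ Y) (η : ℝ) (hη : 0 < η) (hηM : η ≤ 1 / M) :
    (1 / η - M / 2) * ‖projY (y + η • h' y) - y‖ ^ 2 ≤ h (projY (y + η • h' y)) - h y ∧
    (1 / (2 * η)) * ‖projY (y + η • h' y) - y‖ ^ 2 ≤ h (projY (y + η • h' y)) - h y := by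
  obtain ⟨hpY, hpmin⟩ := hproj (y + η • h' y)
  set p := projY (y + η • h' y)
  have hM : 0 < M := by
    by_contra! hM
    linarith [one_div_nonpos.2 hM]
  have hstep := sq_norm_sub_le_mul_inner_of_forall_norm_sub_le hYconv hy hpY hpmin
  have hquad := inner_sub_half_mul_sq_le_sub_of_lipschitz_gradient hdiff hlip y (p - y)
  rw [add_sub_cancel] at hquad
  have hprogress : (1 / η - M / 2) * ‖p - y‖ ^ 2 ≤ h p - h y :=
    calc (1 / η - M / 2) * ‖p - y‖ ^ 2 = ‖p - y‖ ^ 2 / η - M / 2 * ‖p - y‖ ^ 2 := by ring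
      _ ≤ ⟪h' y, p - y⟫ - M / 2 * ‖p - y‖ ^ 2 := by gcongr; rwa [div_le_iff₀' hη]
      _ ≤ h p - h y := hquad
  refine ⟨hprogress, le_trans (mul_le_mul_of_nonneg_right ?_ (sq_nonneg _)) hprogress⟩
  have hMη : M * η ≤ 1 := by rwa [le_div_iff₀ hM, mul_comm] at hηM
  rw [div_sub_div _ _ hη.ne' two_ne_zero, div_le_div_iff₀ (by positivity) (by positivity)]
  nlinarith

/-- ascent progress of one projected gradient step on a function with
`M`-Lipschitz gradient: with `y⁺ = Π_Y(y + η∇h(y))` and `0 < η ≤ 1/M`,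
`h(y⁺) − h(y) ≥ (1/η − M/2)‖y⁺ − y‖² ≥ (1/(2η))‖y⁺ − y‖²`. -/
theorem projected_gradient_ascent_progress (m : ℕ)
    (Y : Set (Euc m)) (hYne : Y.Nonempty) (hYcl : IsClosed Y) (hYconv : Convex ℝ Y)
    (M : ℝ) (hM : 0 < M)
    (h : Euc m → ℝ) (h' : Euc m → Euc m)
    (hdiff : ∀ y, HasGradientAt h (h' y) y)
    (hlip : ∀ y₁ y₂ : Euc m, ‖h' y₁ - h' y₂‖ ≤ M * ‖y₁ - y₂‖)
    (projY : Euc m → Euc m)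
    (hproj : ∀ z, projY z ∈ Y ∧ ∀ w ∈ Y, ‖z - projY z‖ ≤ ‖z - w‖)
    (y : Euc m) (hy : y ∈ Y) (η : ℝ) (hη : 0 < η) (hηM : η ≤ 1 / M) :
    (1 / η - M / 2) * ‖projY (y + η • h' y) - y‖ ^ 2 ≤ h (projY (y + η • h' y)) - h y ∧
    (1 / (2 * η)) * ‖projY (y + η • h' y) - y‖ ^ 2 ≤ h (projY (y + η • h' y)) - h y :=
  projected_gradient_ascent_progress_general m Y hYconv M h h' hdiff hlip projY hproj y hy η hη hηM
end
end

section
/- Let n be a positive integer, δ > 0, c ≥ 0, and let h₁, h₂ : ℝ^n → ℝ be Lipschitz continuous functions satisfying |h₁(x) − h₂(x)| ≤ c for all x ∈ ℝ^n. Define the uniform-ball smoothings h_{i,δ}(x) = E_{w ~ Unif(B^n(0,1))}[ h_i(x + δ w) ] for i = 1,2. Then h_{1,δ} and h_{2,δ} are differentiable on ℝ^n and ‖∇h_{1,δ}(x) − ∇h_{2,δ}(x)‖ ≤ n c / δ for every x ∈ ℝ^n. -/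
/-!
Since `h_δ(x)` is the average of `h` over the ball `B(x, δ)`, the difference `g = h₁ - h₂`,
bounded by `c`, has smoothings at `x` and `y` differing by at most `c` times the relative
volume of the symmetric difference of `B(x, δ)` and `B(y, δ)`. Both balls contain the ball of
radius `δ - |x - y| / 2` about the midpoint, so by Bernoulli's inequality each half of that
symmetric difference has relative volume at most `n |x - y| / (2δ)`. Hence `g_δ = h_{1,δ} - h_{2,δ}`
is `nc/δ`-Lipschitz, and its derivative has norm at most `nc/δ`. Differentiability of `h_{i,δ}`
comes from differentiating under the integral sign, Rademacher's theorem supplying the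
derivative of `h_i` almost everywhere.
-/

open MeasureTheory Metric Set
open scoped NNReal

noncomputable section

/-- The uniform-ball smoothing `h_δ(x) = E_{w ~ Unif(B^n(0,1))}[h(x + δw)]`. -/
def ballSmooth (n : ℕ) (δ : ℝ) (h : Euc n → ℝ) (x : Euc n) : ℝ :=
  ∫ w : Euc n, h (x + δ • w) ∂(unifBall n)

open Module ProbabilityTheory
open scoped ENNReal

section SetIntegral

variable {α F : Type*} [MeasurableSpace α] {μ : Measure α}
  [NormedAddCommGroup F] [NormedSpace ℝ F]

theorem norm_setIntegral_sub_setIntegral_le {s t : Set α} (hs : MeasurableSet s)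
    (ht : MeasurableSet t) (hμs : μ s ≠ ∞) (hμt : μ t ≠ ∞) {f : α → F}
    (hfs : IntegrableOn f s μ) (hft : IntegrableOn f t μ) {C : ℝ} (hC : ∀ x, ‖f x‖ ≤ C) :
    ‖∫ x in s, f x ∂μ - ∫ x in t, f x ∂μ‖ ≤ C * (μ.real (s \ t) + μ.real (t \ s)) := by
  have hs_split := integral_inter_add_sdiff ht hfs
  have ht_split := integral_inter_add_sdiff hs hft
  rw [inter_comm] at ht_split
  have hμst : μ (s \ t) < ∞ := measure_lt_top_of_subset sdiff_subset hμs
  have hμts : μ (t \ s) < ∞ := measure_lt_top_of_subset sdiff_subset hμt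
  calc ‖∫ x in s, f x ∂μ - ∫ x in t, f x ∂μ‖
      = ‖∫ x in s \ t, f x ∂μ - ∫ x in t \ s, f x ∂μ‖ := by
        rw [← hs_split, ← ht_split, add_sub_add_left_eq_sub]
    _ ≤ ‖∫ x in s \ t, f x ∂μ‖ + ‖∫ x in t \ s, f x ∂μ‖ := norm_sub_le _ _
    _ ≤ C * μ.real (s \ t) + C * μ.real (t \ s) :=
        add_le_add (norm_setIntegral_le_of_norm_le_const hμst fun x _ => hC x)
          (norm_setIntegral_le_of_norm_le_const hμts fun x _ => hC x)
    _ = C * (μ.real (s \ t) + μ.real (t \ s)) := by ring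

end SetIntegral

section BallAverage

variable {E : Type*} [NormedAddCommGroup E] [NormedSpace ℝ E]

theorem closedBall_midpoint_subset_inter (a b : E) (r : ℝ) :
    closedBall (midpoint ℝ a b) (r - dist a b / 2) ⊆ closedBall a r ∩ closedBall b r := by
  intro u hu
  rw [mem_closedBall] at hu
  have ha : dist (midpoint ℝ a b) a = dist a b / 2 := by
    rw [dist_midpoint_left, Real.norm_two]; ring
  have hb : dist (midpoint ℝ a b) b = dist a b / 2 := by
    rw [dist_midpoint_right, Real.norm_two]; ring
  constructor <;> rw [mem_closedBall]
  · linarith [dist_triangle u (midpoint ℝ a b) a]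
  · linarith [dist_triangle u (midpoint ℝ a b) b]

variable [FiniteDimensional ℝ E] [MeasurableSpace E] [BorelSpace E]
  (μ : Measure E) [μ.IsAddHaarMeasure]

theorem addHaar_real_closedBall_sdiff_le (a b : E) {r : ℝ} (hr : 0 < r) :
    μ.real (closedBall a r \ closedBall b r)
      ≤ finrank ℝ E * dist a b / (2 * r) * μ.real (closedBall a r) := by
  set d := dist a b
  set n := finrank ℝ E
  rcases le_or_gt d (2 * r) with hd | hd
  · have hlens : μ.real (closedBall (midpoint ℝ a b) (r - d / 2))
        ≤ μ.real (closedBall a r ∩ closedBall b r) :=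
      measureReal_mono (closedBall_midpoint_subset_inter a b r)
        (measure_ne_top_of_subset inter_subset_left measure_closedBall_lt_top.ne)
    have hsplit : μ.real (closedBall a r \ closedBall b r)
        + μ.real (closedBall a r ∩ closedBall b r) = μ.real (closedBall a r) :=
      measureReal_sdiff_add_inter measurableSet_closedBall measure_closedBall_lt_top.ne
    have hbernoulli : r ^ n * (1 - n * (d / (2 * r))) ≤ (r - d / 2) ^ n := by
      have hx : d / (2 * r) ≤ 1 := (div_le_one (by positivity)).2 hd
      have := one_add_mul_le_pow (a := -(d / (2 * r))) (by linarith) n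
      calc r ^ n * (1 - n * (d / (2 * r))) ≤ r ^ n * (1 - d / (2 * r)) ^ n := by
            gcongr
            simpa only [mul_neg, ← sub_eq_add_neg] using this
        _ = (r - d / 2) ^ n := by rw [← mul_pow]; congr 1; field_simp
    rw [Measure.addHaar_real_closedBall' μ _ (by linarith)] at hlens
    rw [Measure.addHaar_real_closedBall' μ _ hr.le] at hsplit ⊢
    set U := μ.real (closedBall (0 : E) 1)
    calc μ.real (closedBall a r \ closedBall b r)
        = r ^ n * U - μ.real (closedBall a r ∩ closedBall b r) := by linarith
      _ ≤ r ^ n * U - (r - d / 2) ^ n * U := by linarith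
      _ ≤ r ^ n * U - r ^ n * (1 - n * (d / (2 * r))) * U := by gcongr
      _ = n * d / (2 * r) * (r ^ n * U) := by field_simp; ring
  · have : Nontrivial E := ⟨⟨a, b, fun hab => by simp [d, hab] at hd; linarith⟩⟩
    have hn : (1 : ℝ) ≤ n := by exact_mod_cast finrank_pos
    calc μ.real (closedBall a r \ closedBall b r) ≤ μ.real (closedBall a r) :=
          measureReal_mono sdiff_subset measure_closedBall_lt_top.ne
      _ ≤ n * d / (2 * r) * μ.real (closedBall a r) := by
          refine le_mul_of_one_le_left measureReal_nonneg ?_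
          rw [one_le_div (by positivity)]
          nlinarith

theorem dist_setAverage_closedBall_le {F : Type*} [NormedAddCommGroup F] [NormedSpace ℝ F]
    {g : E → F} (hg : LocallyIntegrable g μ) {C : ℝ} (hC : ∀ x, ‖g x‖ ≤ C) {r : ℝ}
    (hr : 0 < r) (x y : E) :
    dist (⨍ u in closedBall x r, g u ∂μ) (⨍ u in closedBall y r, g u ∂μ)
      ≤ finrank ℝ E * C / r * dist x y := by
  set V := μ.real (closedBall x r)
  have hVy : μ.real (closedBall y r) = V := by
    simp only [V, Measure.addHaar_real_closedBall' μ _ hr.le]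
  have hV : 0 < V := ENNReal.toReal_pos (measure_closedBall_pos μ x hr).ne'
    measure_closedBall_lt_top.ne
  have hC₀ : 0 ≤ C := (norm_nonneg _).trans (hC x)
  have hxy := addHaar_real_closedBall_sdiff_le μ x y hr
  have hyx := addHaar_real_closedBall_sdiff_le μ y x hr
  rw [hVy, dist_comm y x] at hyx
  rw [setAverage_eq, setAverage_eq, hVy, dist_eq_norm, ← smul_sub, norm_smul,
    Real.norm_of_nonneg (inv_nonneg.2 hV.le)]
  calc V⁻¹ * ‖∫ u in closedBall x r, g u ∂μ - ∫ u in closedBall y r, g u ∂μ‖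
      ≤ V⁻¹ * (C * (μ.real (closedBall x r \ closedBall y r)
          + μ.real (closedBall y r \ closedBall x r))) := by
        gcongr
        exact norm_setIntegral_sub_setIntegral_le measurableSet_closedBall
          measurableSet_closedBall measure_closedBall_lt_top.ne measure_closedBall_lt_top.ne
          (hg.integrableOn_isCompact (isCompact_closedBall x r))
          (hg.integrableOn_isCompact (isCompact_closedBall y r)) hC
    _ ≤ V⁻¹ * (C * (finrank ℝ E * dist x y / (2 * r) * V
          + finrank ℝ E * dist x y / (2 * r) * V)) := by gcongr
    _ = finrank ℝ E * C / r * dist x y := by field_simp; ring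

end BallAverage

theorem LipschitzWith.hasFDerivAt_integral_comp_add_smul {E F : Type*} [NormedAddCommGroup E]
    [NormedSpace ℝ E] [FiniteDimensional ℝ E] [MeasurableSpace E] [BorelSpace E]
    [NormedAddCommGroup F] [NormedSpace ℝ F] [FiniteDimensional ℝ F]
    {μ ν : Measure E} [μ.IsAddHaarMeasure] [IsFiniteMeasure ν] (hν : ν ≪ μ)
    {h : E → F} {L : ℝ≥0} (hh : LipschitzWith L h) {δ : ℝ} (hδ : δ ≠ 0) {x : E}
    (hint : Integrable (fun w => h (x + δ • w)) ν) :
    HasFDerivAt (fun y => ∫ w, h (y + δ • w) ∂ν) (∫ w, fderiv ℝ h (x + δ • w) ∂ν) x := by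
  have hdiff : ∀ᵐ w ∂ν, DifferentiableAt ℝ h (x + δ • w) :=
    hν.ae_le <| ((measurePreserving_add_left μ x).quasiMeasurePreserving.comp
      (Measure.quasiMeasurePreserving_smul μ hδ)).ae hh.ae_differentiableAt
  refine (hasFDerivAt_integral_of_dominated_loc_of_lip (bound := fun _ => (L : ℝ))
    Filter.univ_mem
    (.of_forall fun y => (hh.continuous.comp (by fun_prop)).aestronglyMeasurable) hint
    ((measurable_fderiv ℝ h).comp (by fun_prop)).aestronglyMeasurable
    (.of_forall fun w => ?_) (integrable_const _)
    (hdiff.mono fun w hw => (hasFDerivAt_comp_add_right _).2 hw.hasFDerivAt)).2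
  rw [Real.nnabs_coe, lipschitzOnWith_univ]
  exact mul_one L ▸ hh.comp (isometry_add_right (δ • w)).lipschitz

section BallSmooth

variable {n : ℕ} {δ : ℝ}

theorem unifBall_eq_cond : unifBall n = volume[|closedBall (0 : Euc n) 1] := rfl

instance : IsProbabilityMeasure (unifBall n) := by
  rw [unifBall_eq_cond]
  exact cond_isProbabilityMeasure_of_finite (measure_closedBall_pos _ _ one_pos).ne'
    measure_closedBall_lt_top.ne

theorem unifBall_absolutelyContinuous : unifBall n ≪ volume := by
  rw [unifBall_eq_cond]
  exact cond_absolutelyContinuous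

theorem Continuous.integrable_unifBall {F : Type*} [NormedAddCommGroup F] {f : Euc n → F}
    (hf : Continuous f) : Integrable f (unifBall n) :=
  (hf.continuousOn.integrableOn_compact (isCompact_closedBall 0 1)).smul_measure
    (ENNReal.inv_ne_top.2 (measure_closedBall_pos _ _ one_pos).ne')

theorem ballSmooth_sub {h₁ h₂ : Euc n → ℝ} (hh₁ : Continuous h₁) (hh₂ : Continuous h₂) :
    ballSmooth n δ (h₁ - h₂) = ballSmooth n δ h₁ - ballSmooth n δ h₂ := by
  ext x
  exact integral_sub (hh₁.comp (by fun_prop)).integrable_unifBall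
    (hh₂.comp (by fun_prop)).integrable_unifBall

theorem ballSmooth_eq_setAverage (hδ : 0 < δ) (h : Euc n → ℝ) (x : Euc n) :
    ballSmooth n δ h x = ⨍ u in closedBall x δ, h u := by
  have htranslate : ∫ v in closedBall 0 δ, h (x + v) = ∫ u in closedBall x δ, h u := by
    have hpre : (x + ·) ⁻¹' closedBall x δ = closedBall (0 : Euc n) δ := by simp
    rw [← hpre]
    exact (measurePreserving_add_left volume x).setIntegral_preimage_emb
      (measurableEmbedding_addLeft x) h _
  rw [ballSmooth, unifBall, ← setAverage_eq', setAverage_eq, setAverage_eq,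
    Measure.setIntegral_comp_smul_of_pos _ (fun v => h (x + v)) _ hδ,
    smul_unitClosedBall_of_nonneg hδ.le, htranslate,
    Measure.addHaar_real_closedBall' _ _ hδ.le, smul_smul, mul_inv, finrank_euclideanSpace_fin,
    mul_comm]

theorem LipschitzWith.hasFDerivAt_ballSmooth {h : Euc n → ℝ} {L : ℝ≥0}
    (hh : LipschitzWith L h) (hδ : δ ≠ 0) (x : Euc n) :
    HasFDerivAt (ballSmooth n δ h) (∫ w, fderiv ℝ h (x + δ • w) ∂unifBall n) x :=
  hh.hasFDerivAt_integral_comp_add_smul unifBall_absolutelyContinuous hδ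
    (hh.continuous.comp (by fun_prop)).integrable_unifBall

theorem norm_fderiv_ballSmooth_le (hδ : 0 < δ) {g : Euc n → ℝ} (hg : Continuous g) {C : ℝ}
    (hC : ∀ x, |g x| ≤ C) (x : Euc n) :
    ‖fderiv ℝ (ballSmooth n δ g) x‖ ≤ n * C / δ := by
  have hC₀ : 0 ≤ C := (abs_nonneg _).trans (hC x)
  refine norm_fderiv_le_of_lip' ℝ (by positivity) (.of_forall fun y => ?_)
  have := dist_setAverage_closedBall_le volume hg.locallyIntegrable hC hδ y x
  rwa [finrank_euclideanSpace_fin, ← ballSmooth_eq_setAverage hδ, ← ballSmooth_eq_setAverage hδ,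
    dist_eq_norm, dist_eq_norm] at this

end BallSmooth

theorem smoothing_gradient_close_general (n : ℕ)
    (δ c : ℝ) (hδ : 0 < δ)
    (h₁ h₂ : Euc n → ℝ) (L₁ L₂ : ℝ≥0)
    (hlip₁ : LipschitzWith L₁ h₁) (hlip₂ : LipschitzWith L₂ h₂)
    (hclose : ∀ x : Euc n, |h₁ x - h₂ x| ≤ c) :
    Differentiable ℝ (ballSmooth n δ h₁) ∧ Differentiable ℝ (ballSmooth n δ h₂) ∧
    ∀ x : Euc n,
      ‖gradient (ballSmooth n δ h₁) x - gradient (ballSmooth n δ h₂) x‖ ≤ (n : ℝ) * c / δ := by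
  have hd₁ : Differentiable ℝ (ballSmooth n δ h₁) :=
    fun x => (hlip₁.hasFDerivAt_ballSmooth hδ.ne' x).differentiableAt
  have hd₂ : Differentiable ℝ (ballSmooth n δ h₂) :=
    fun x => (hlip₂.hasFDerivAt_ballSmooth hδ.ne' x).differentiableAt
  refine ⟨hd₁, hd₂, fun x => ?_⟩
  have hfderiv_sub : fderiv ℝ (ballSmooth n δ h₁) x - fderiv ℝ (ballSmooth n δ h₂) x
      = fderiv ℝ (ballSmooth n δ (h₁ - h₂)) x := by
    rw [ballSmooth_sub hlip₁.continuous hlip₂.continuous, fderiv_sub (hd₁ x) (hd₂ x)]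
  rw [gradient, gradient, ← map_sub, LinearIsometryEquiv.norm_map, hfderiv_sub]
  exact norm_fderiv_ballSmooth_le hδ (hlip₁.continuous.sub hlip₂.continuous) hclose x

/-- if `h₁, h₂` are Lipschitz and `|h₁ − h₂| ≤ c` pointwise, then their
uniform-ball smoothings are differentiable with `‖∇h_{1,δ}(x) − ∇h_{2,δ}(x)‖ ≤ nc/δ`. -/
theorem smoothing_gradient_close (n : ℕ) (hn : 0 < n)
    (δ c : ℝ) (hδ : 0 < δ) (hc : 0 ≤ c)
    (h₁ h₂ : Euc n → ℝ) (L₁ L₂ : ℝ≥0)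
    (hlip₁ : LipschitzWith L₁ h₁) (hlip₂ : LipschitzWith L₂ h₂)
    (hclose : ∀ x : Euc n, |h₁ x - h₂ x| ≤ c) :
    Differentiable ℝ (ballSmooth n δ h₁) ∧ Differentiable ℝ (ballSmooth n δ h₂) ∧
    ∀ x : Euc n,
      ‖gradient (ballSmooth n δ h₁) x - gradient (ballSmooth n δ h₂) x‖ ≤ (n : ℝ) * c / δ :=
  smoothing_gradient_close_general n δ c hδ h₁ h₂ L₁ L₂ hlip₁ hlip₂ hclose
end
end
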